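/- Stationarity of the inverse objective: with K = A·diag(Λα)·Aᵀ symmetric, the first variation of Γ(u, w, α) = (1/2)(Hu − ũ)ᵀS(Hu − ũ) + wᵀ(Ku − f) + (1/2)αᵀ(γR)α vanishes for all variations (δu, δw, δα) if and only if (i) Ku = f, (ii) Kw + HᵀSHu − HᵀSũ = 0, and (iii) Λᵀ((Aᵀw) ∘ (Aᵀu)) + γRα = 0. -/
import Mathlib
open Matrix

noncomputable def mulVecCLM {a b : ℕ} (M : Matrix (Fin a) (Fin b) ℝ) :
    (Fin b → ℝ) →L[ℝ] (Fin a → ℝ) :=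
  LinearMap.toContinuousLinearMap M.mulVecLin

@[simp] lemma mulVecCLM_apply {a b : ℕ} (M : Matrix (Fin a) (Fin b) ℝ) (v : Fin b → ℝ) :
    mulVecCLM M v = M.mulVec v := rfl

noncomputable def dotCLM (k : ℕ) : (Fin k → ℝ) →L[ℝ] (Fin k → ℝ) →L[ℝ] ℝ :=
  LinearMap.toContinuousLinearMap <|
    (LinearMap.toContinuousLinearMap :
        ((Fin k → ℝ) →ₗ[ℝ] ℝ) ≃ₗ[ℝ] ((Fin k → ℝ) →L[ℝ] ℝ)).toLinearMap.comp <|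
      LinearMap.mk₂ ℝ (· ⬝ᵥ ·) add_dotProduct smul_dotProduct
        dotProduct_add dotProduct_smul

@[simp] lemma dotCLM_apply {k : ℕ} (x y : Fin k → ℝ) : dotCLM k x y = x ⬝ᵥ y := rfl

lemma mulVec_diag_form {n q : ℕ} (A : Matrix (Fin n) (Fin q) ℝ) (d : Fin q → ℝ) (u : Fin n → ℝ) :
    (A * Matrix.diagonal d * Aᵀ).mulVec u = A.mulVec (d * Aᵀ.mulVec u) := by
  have h : Matrix.diagonal d *ᵥ (Aᵀ *ᵥ u) = d * (Aᵀ *ᵥ u) :=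
    funext fun i => Matrix.mulVec_diagonal d (Aᵀ.mulVec u) i
  rw [Matrix.mul_assoc, ← Matrix.mulVec_mulVec, ← Matrix.mulVec_mulVec, h]

noncomputable def kCLM {n p q : ℕ} (A : Matrix (Fin n) (Fin q) ℝ) (Λ : Matrix (Fin q) (Fin p) ℝ) :
    (Fin p → ℝ) →L[ℝ] (Fin n → ℝ) →L[ℝ] (Fin n → ℝ) :=
  LinearMap.toContinuousLinearMap <|
    (LinearMap.toContinuousLinearMap :
        ((Fin n → ℝ) →ₗ[ℝ] (Fin n → ℝ)) ≃ₗ[ℝ] ((Fin n → ℝ) →L[ℝ] (Fin n → ℝ))).toLinearMap.comp <|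
      LinearMap.mk₂ ℝ (fun α u => (A * Matrix.diagonal (Λ.mulVec α) * Aᵀ).mulVec u)
        (fun a b u => by
          simp only [mulVec_diag_form]
          rw [Matrix.mulVec_add, add_mul, Matrix.mulVec_add])
        (fun c a u => by
          simp only [mulVec_diag_form]
          rw [Matrix.mulVec_smul, smul_mul_assoc, Matrix.mulVec_smul])
        (fun a u v => by
          simp only [mulVec_diag_form]
          rw [Matrix.mulVec_add, mul_add, Matrix.mulVec_add])
        (fun c a u => by
          simp only [mulVec_diag_form]
          rw [Matrix.mulVec_smul, mul_smul_comm, Matrix.mulVec_smul])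

@[simp] lemma kCLM_apply {n p q : ℕ} (A : Matrix (Fin n) (Fin q) ℝ) (Λ : Matrix (Fin q) (Fin p) ℝ)
    (α : Fin p → ℝ) (u : Fin n → ℝ) :
    kCLM A Λ α u = (A * Matrix.diagonal (Λ.mulVec α) * Aᵀ).mulVec u := rfl

lemma dot_symm_mulVec {k : ℕ} {S : Matrix (Fin k) (Fin k) ℝ} (hS : S.IsSymm)
    (x y : Fin k → ℝ) : x ⬝ᵥ S.mulVec y = S.mulVec x ⬝ᵥ y := by
  rw [Matrix.dotProduct_mulVec, ← Matrix.mulVec_transpose, hS.eq]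

lemma mulVec_transpose_dot {a b : ℕ} (M : Matrix (Fin a) (Fin b) ℝ) (x : Fin a → ℝ)
    (y : Fin b → ℝ) : Mᵀ.mulVec x ⬝ᵥ y = x ⬝ᵥ M.mulVec y := by
  rw [Matrix.mulVec_transpose, ← Matrix.dotProduct_mulVec]

lemma dot_mul_left {k : ℕ} (a d b : Fin k → ℝ) : a ⬝ᵥ (d * b) = (a * b) ⬝ᵥ d := by
  unfold dotProduct
  refine Finset.sum_congr rfl fun i _ => ?_
  simp only [Pi.mul_apply]
  ring

theorem inverse_objective_stationarity
    (n m p q : ℕ)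
    (H : Matrix (Fin m) (Fin n) ℝ) (S : Matrix (Fin m) (Fin m) ℝ) (hS : S.IsSymm)
    (utilde : Fin m → ℝ) (f : Fin n → ℝ) (γ : ℝ)
    (R : Matrix (Fin p) (Fin p) ℝ) (hR : R.IsSymm)
    (A : Matrix (Fin n) (Fin q) ℝ) (Λ : Matrix (Fin q) (Fin p) ℝ)
    (u w : Fin n → ℝ) (α : Fin p → ℝ) :
    (fderiv ℝ
        (fun x : (Fin n → ℝ) × (Fin n → ℝ) × (Fin p → ℝ) =>
          (1 / 2 : ℝ) * ((H.mulVec x.1 - utilde) ⬝ᵥ S.mulVec (H.mulVec x.1 - utilde)) +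
            x.2.1 ⬝ᵥ ((A * Matrix.diagonal (Λ.mulVec x.2.2) * Aᵀ).mulVec x.1 - f) +
            (1 / 2 : ℝ) * (x.2.2 ⬝ᵥ (γ • R).mulVec x.2.2))
        (u, w, α) = 0) ↔
      ((A * Matrix.diagonal (Λ.mulVec α) * Aᵀ).mulVec u = f ∧
        (A * Matrix.diagonal (Λ.mulVec α) * Aᵀ).mulVec w +
          (Hᵀ * S * H).mulVec u - (Hᵀ * S).mulVec utilde = 0 ∧
        Λᵀ.mulVec ((Aᵀ.mulVec w) * (Aᵀ.mulVec u)) + (γ • R).mulVec α = 0) := by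
  classical
  have hPu : HasFDerivAt (fun x : (Fin n → ℝ) × (Fin n → ℝ) × (Fin p → ℝ) => x.1)
      (ContinuousLinearMap.fst ℝ (Fin n → ℝ) ((Fin n → ℝ) × (Fin p → ℝ))) (u, w, α) :=
    (ContinuousLinearMap.fst ℝ (Fin n → ℝ) ((Fin n → ℝ) × (Fin p → ℝ))).hasFDerivAt
  have hPw : HasFDerivAt (fun x : (Fin n → ℝ) × (Fin n → ℝ) × (Fin p → ℝ) => x.2.1)
      ((ContinuousLinearMap.fst ℝ (Fin n → ℝ) (Fin p → ℝ)).comp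
        (ContinuousLinearMap.snd ℝ (Fin n → ℝ) ((Fin n → ℝ) × (Fin p → ℝ)))) (u, w, α) :=
    ((ContinuousLinearMap.fst ℝ (Fin n → ℝ) (Fin p → ℝ)).comp
      (ContinuousLinearMap.snd ℝ (Fin n → ℝ) ((Fin n → ℝ) × (Fin p → ℝ)))).hasFDerivAt
  have hPa : HasFDerivAt (fun x : (Fin n → ℝ) × (Fin n → ℝ) × (Fin p → ℝ) => x.2.2)
      ((ContinuousLinearMap.snd ℝ (Fin n → ℝ) (Fin p → ℝ)).comp
        (ContinuousLinearMap.snd ℝ (Fin n → ℝ) ((Fin n → ℝ) × (Fin p → ℝ)))) (u, w, α) :=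
    ((ContinuousLinearMap.snd ℝ (Fin n → ℝ) (Fin p → ℝ)).comp
      (ContinuousLinearMap.snd ℝ (Fin n → ℝ) ((Fin n → ℝ) × (Fin p → ℝ)))).hasFDerivAt
  have hg : HasFDerivAt (fun x : (Fin n → ℝ) × (Fin n → ℝ) × (Fin p → ℝ) =>
      H.mulVec x.1 - utilde) _ (u, w, α) :=
    ((mulVecCLM H).hasFDerivAt.comp (u, w, α) hPu).sub_const utilde
  have hSg : HasFDerivAt (fun x : (Fin n → ℝ) × (Fin n → ℝ) × (Fin p → ℝ) =>
      S.mulVec (H.mulVec x.1 - utilde)) _ (u, w, α) :=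
    (mulVecCLM S).hasFDerivAt.comp (u, w, α) hg
  have hT1 : HasFDerivAt (fun x : (Fin n → ℝ) × (Fin n → ℝ) × (Fin p → ℝ) =>
      (H.mulVec x.1 - utilde) ⬝ᵥ S.mulVec (H.mulVec x.1 - utilde)) _ (u, w, α) :=
    (dotCLM m).hasFDerivAt_of_bilinear hg hSg
  have hKf : HasFDerivAt (fun x : (Fin n → ℝ) × (Fin n → ℝ) × (Fin p → ℝ) =>
      (A * Matrix.diagonal (Λ.mulVec x.2.2) * Aᵀ).mulVec x.1 - f) _ (u, w, α) :=
    ((kCLM A Λ).hasFDerivAt_of_bilinear hPa hPu).sub_const f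
  have hT2 : HasFDerivAt (fun x : (Fin n → ℝ) × (Fin n → ℝ) × (Fin p → ℝ) =>
      x.2.1 ⬝ᵥ ((A * Matrix.diagonal (Λ.mulVec x.2.2) * Aᵀ).mulVec x.1 - f)) _ (u, w, α) :=
    (dotCLM n).hasFDerivAt_of_bilinear hPw hKf
  have hRa : HasFDerivAt (fun x : (Fin n → ℝ) × (Fin n → ℝ) × (Fin p → ℝ) =>
      (γ • R).mulVec x.2.2) _ (u, w, α) :=
    (mulVecCLM (γ • R)).hasFDerivAt.comp (u, w, α) hPa
  have hT3 : HasFDerivAt (fun x : (Fin n → ℝ) × (Fin n → ℝ) × (Fin p → ℝ) =>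
      x.2.2 ⬝ᵥ (γ • R).mulVec x.2.2) _ (u, w, α) :=
    (dotCLM p).hasFDerivAt_of_bilinear hPa hRa
  have hD : HasFDerivAt (fun x : (Fin n → ℝ) × (Fin n → ℝ) × (Fin p → ℝ) =>
      (1 / 2 : ℝ) * ((H.mulVec x.1 - utilde) ⬝ᵥ S.mulVec (H.mulVec x.1 - utilde)) +
        x.2.1 ⬝ᵥ ((A * Matrix.diagonal (Λ.mulVec x.2.2) * Aᵀ).mulVec x.1 - f) +
        (1 / 2 : ℝ) * (x.2.2 ⬝ᵥ (γ • R).mulVec x.2.2)) _ (u, w, α) :=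
    ((hT1.const_mul (1 / 2 : ℝ)).add hT2).add (hT3.const_mul (1 / 2 : ℝ))
  obtain ⟨D, hD', hval⟩ : ∃ D : ((Fin n → ℝ) × (Fin n → ℝ) × (Fin p → ℝ)) →L[ℝ] ℝ,
      HasFDerivAt (fun x : (Fin n → ℝ) × (Fin n → ℝ) × (Fin p → ℝ) =>
        (1 / 2 : ℝ) * ((H.mulVec x.1 - utilde) ⬝ᵥ S.mulVec (H.mulVec x.1 - utilde)) +
          x.2.1 ⬝ᵥ ((A * Matrix.diagonal (Λ.mulVec x.2.2) * Aᵀ).mulVec x.1 - f) +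
          (1 / 2 : ℝ) * (x.2.2 ⬝ᵥ (γ • R).mulVec x.2.2)) D (u, w, α) ∧
      ∀ v : (Fin n → ℝ) × (Fin n → ℝ) × (Fin p → ℝ),
        D v = ((A * Matrix.diagonal (Λ.mulVec α) * Aᵀ).mulVec w +
            (Hᵀ * S * H).mulVec u - (Hᵀ * S).mulVec utilde) ⬝ᵥ v.1 +
          ((A * Matrix.diagonal (Λ.mulVec α) * Aᵀ).mulVec u - f) ⬝ᵥ v.2.1 +
          (Λᵀ.mulVec ((Aᵀ.mulVec w) * (Aᵀ.mulVec u)) + (γ • R).mulVec α) ⬝ᵥ v.2.2 := by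
    refine ⟨_, hD, fun v => ?_⟩
    simp only [ContinuousLinearMap.add_apply, ContinuousLinearMap.smul_apply,
      ContinuousLinearMap.precompR_apply, ContinuousLinearMap.precompL_apply,
      ContinuousLinearMap.coe_comp', Function.comp_apply, ContinuousLinearMap.coe_fst',
      ContinuousLinearMap.coe_snd', mulVecCLM_apply, dotCLM_apply, kCLM_apply,
      ContinuousLinearMap.comp_apply, ContinuousLinearMap.compL_apply,
      ContinuousLinearMap.flip_apply, smul_eq_mul]
    have hKsym : (A * Matrix.diagonal (Λ.mulVec α) * Aᵀ).IsSymm := by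
      simp [Matrix.IsSymm, Matrix.transpose_mul, Matrix.diagonal_transpose, Matrix.mul_assoc]
    have hγR : (γ • R).IsSymm := by
      simp [Matrix.IsSymm, Matrix.transpose_smul, hR.eq]
    have ea : H.mulVec v.1 ⬝ᵥ S.mulVec (H.mulVec u - utilde) =
        (H.mulVec u - utilde) ⬝ᵥ S.mulVec (H.mulVec v.1) := by
      rw [dot_symm_mulVec hS, dotProduct_comm]
    have hvec : (Hᵀ * S * H).mulVec u - (Hᵀ * S).mulVec utilde =
        Hᵀ.mulVec (S.mulVec (H.mulVec u - utilde)) := by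
      simp [Matrix.mulVec_sub, Matrix.mulVec_mulVec, Matrix.mul_assoc]
    have eb : (H.mulVec u - utilde) ⬝ᵥ S.mulVec (H.mulVec v.1) =
        ((Hᵀ * S * H).mulVec u - (Hᵀ * S).mulVec utilde) ⬝ᵥ v.1 := by
      rw [hvec, mulVec_transpose_dot, dot_symm_mulVec hS]
    have ec : w ⬝ᵥ (A * Matrix.diagonal (Λ.mulVec α) * Aᵀ).mulVec v.1 =
        (A * Matrix.diagonal (Λ.mulVec α) * Aᵀ).mulVec w ⬝ᵥ v.1 :=
      dot_symm_mulVec hKsym w v.1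
    have ed : w ⬝ᵥ (A * Matrix.diagonal (Λ.mulVec v.2.2) * Aᵀ).mulVec u =
        Λᵀ.mulVec (Aᵀ.mulVec w * Aᵀ.mulVec u) ⬝ᵥ v.2.2 := by
      rw [mulVec_diag_form, ← mulVec_transpose_dot, dot_mul_left, mulVec_transpose_dot]
    have ee : α ⬝ᵥ (γ • R).mulVec v.2.2 = (γ • R).mulVec α ⬝ᵥ v.2.2 :=
      dot_symm_mulVec hγR α v.2.2
    have ef : v.2.2 ⬝ᵥ (γ • R).mulVec α = (γ • R).mulVec α ⬝ᵥ v.2.2 :=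
      dotProduct_comm _ _
    rw [ea, eb, dotProduct_add, ec, ed, ee, ef, dotProduct_comm v.2.1]
    simp only [sub_dotProduct, add_dotProduct]
    ring
  rw [hD'.fderiv]
  constructor
  · intro h0
    have hz : ∀ v : (Fin n → ℝ) × (Fin n → ℝ) × (Fin p → ℝ), D v = 0 := fun v => by
      rw [h0]; simp
    have h1 : (A * Matrix.diagonal (Λ.mulVec α) * Aᵀ).mulVec u - f = 0 := by
      funext i
      have h := hz (0, Pi.single i 1, 0)
      rw [hval] at h
      simpa using h
    have h2 : (A * Matrix.diagonal (Λ.mulVec α) * Aᵀ).mulVec w +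
        (Hᵀ * S * H).mulVec u - (Hᵀ * S).mulVec utilde = 0 := by
      funext i
      have h := hz (Pi.single i 1, 0, 0)
      rw [hval] at h
      simpa using h
    have h3 : Λᵀ.mulVec ((Aᵀ.mulVec w) * (Aᵀ.mulVec u)) + (γ • R).mulVec α = 0 := by
      funext i
      have h := hz (0, 0, Pi.single i 1)
      rw [hval] at h
      simpa using h
    exact ⟨sub_eq_zero.mp h1, h2, h3⟩
  · rintro ⟨h1, h2, h3⟩
    refine ContinuousLinearMap.ext fun v => ?_
    rw [hval, h2, h3, sub_eq_zero_of_eq h1]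
    simp
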